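/- arXiv:2505.04882 — 8 statements merged into one kernel-verified Lean document; each statement's English description precedes it below -/
import Mathlib

section
/- For odd n ≥ 5, the polynomial D(CL_n, x) = x^(n-1) + (n-2)x^(n-2) + x has a real root in the open interval (−(n−2) − 1/(n−2)^(n−3), −(n−2)). -/
theorem CL_n_odd_real_root (n : ℕ) (hn : 5 ≤ n) (hodd : Odd n) :
    ∃ x : ℝ, x ∈ Set.Ioo (-((n : ℝ) - 2) - 1 / ((n : ℝ) - 2) ^ (n - 3)) (-((n : ℝ) - 2)) ∧
      x ^ (n - 1) + ((n : ℝ) - 2) * x ^ (n - 2) + x = 0 := by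
  set c : ℝ := (n : ℝ) - 2 with hc
  have hn5 : (5:ℝ) ≤ (n:ℝ) := by exact_mod_cast hn
  have hc3 : (3:ℝ) ≤ c := by rw [hc]; linarith
  have hcpos : 0 < c := by linarith
  set ε : ℝ := 1 / c ^ (n - 3) with hε
  have hεpos : 0 < ε := by positivity
  have hεc : ε * c ^ (n - 3) = 1 := by
    rw [hε]; field_simp
  set f : ℝ → ℝ := fun x => x ^ (n - 1) + c * x ^ (n - 2) + x with hf
  have hcont : Continuous f := by rw [hf]; fun_prop
  have e1 : n - 1 = (n - 2) + 1 := by omega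
  have e2 : n - 2 = (n - 3) + 1 := by omega
  have hodd2 : Odd (n - 2) := Nat.Odd.sub_even (by omega) hodd (by norm_num)
  have heven1 : Even (n - 1) := Nat.Odd.sub_odd hodd odd_one
  -- value at right endpoint
  have hfb : f (-c) = -c := by
    have h1 : (-c) ^ (n - 2) = -(c ^ (n - 2)) := hodd2.neg_pow c
    have h2 : (-c) ^ (n - 1) = c ^ (n - 1) := heven1.neg_pow c
    have h3 : c ^ (n - 1) = c ^ (n - 2) * c := by rw [e1, pow_succ]
    simp only [hf, h1, h2, h3]
    ring
  -- value at left endpoint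
  have hfa : f (-c - ε) = ε * (c + ε) ^ (n - 2) - (c + ε) := by
    have hne : -c - ε = -(c + ε) := by ring
    have h1 : (-(c + ε)) ^ (n - 2) = -((c + ε) ^ (n - 2)) := hodd2.neg_pow _
    have h2 : (-(c + ε)) ^ (n - 1) = (c + ε) ^ (n - 1) := heven1.neg_pow _
    have h3 : (c + ε) ^ (n - 1) = (c + ε) ^ (n - 2) * (c + ε) := by rw [e1, pow_succ]
    simp only [hf, hne, h1, h2, h3]
    ring
  have hfapos : 0 < f (-c - ε) := by
    rw [hfa]
    have hlt : c ^ (n - 3) < (c + ε) ^ (n - 3) := by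
      apply pow_lt_pow_left₀ (by linarith) (le_of_lt hcpos) (by omega)
    have hkey : c + ε < ε * (c + ε) ^ (n - 2) := by
      have h4 : (c + ε) ^ (n - 2) = (c + ε) ^ (n - 3) * (c + ε) := by rw [e2, pow_succ]
      rw [h4]
      calc c + ε = ε * (c ^ (n - 3) * (c + ε)) := by
            rw [← mul_assoc, hεc, one_mul]
        _ < ε * ((c + ε) ^ (n - 3) * (c + ε)) := by
            apply mul_lt_mul_of_pos_left _ hεpos
            apply mul_lt_mul_of_pos_right hlt (by linarith)
    linarith
  have hab : -c - ε ≤ -c := by linarith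
  have hsub : Set.Ioo (f (-c)) (f (-c - ε)) ⊆ f '' Set.Ioo (-c - ε) (-c) :=
    intermediate_value_Ioo' hab hcont.continuousOn
  have hmem : (0:ℝ) ∈ Set.Ioo (f (-c)) (f (-c - ε)) := by
    rw [hfb]; exact ⟨by linarith, hfapos⟩
  obtain ⟨x, hx, hfx⟩ := hsub hmem
  exact ⟨x, hx, hfx⟩
end

section
/- For even n ≥ 4, the polynomial D(CL_n, x) = x^(n-1) + (n-2)x^(n-2) + x has a real root in the half-open interval (−(n−2), −(n−2) + 1/(n−3)^(n−3)]. -/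
/-!
Write `n = k + 3` with `k` odd and put `c = n - 2`, `ε = 1 / (n - 3) ^ (n - 3)`. Because `k` is odd,
`f x = x ^ (k + 2) + c x ^ (k + 1) + x` satisfies `f (-y) = y (y ^ k (c - y) - 1)`. Hence `f (-c) = -c < 0`,
while at `y = c - ε ≥ n - 3` the factor `y ^ k ε - 1` is nonnegative, so the intermediate value theorem
gives a root in `(-c, -c + ε]`.
-/

lemma pow_add_two_add_mul_pow_add_one_add_neg_of_odd {k : ℕ} (hk : Odd k) (c y : ℝ) :
    (-y) ^ (k + 2) + c * (-y) ^ (k + 1) + -y = y * (y ^ k * (c - y) - 1) := by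
  rw [(hk.add_odd odd_one).neg_pow, (hk.add_even even_two).neg_pow]
  ring

lemma exists_root_mem_Ioc_of_odd {k : ℕ} (hk : Odd k) {c ε : ℝ} (hc : 0 < c) (hεc : ε ≤ c)
    (h : 1 ≤ (c - ε) ^ k * ε) :
    ∃ x ∈ Set.Ioc (-c) (-c + ε), x ^ (k + 2) + c * x ^ (k + 1) + x = 0 := by
  have hleft : (-c) ^ (k + 2) + c * (-c) ^ (k + 1) + -c = -c := by
    rw [pow_add_two_add_mul_pow_add_one_add_neg_of_odd hk]
    ring
  have hright : 0 ≤ (-c + ε) ^ (k + 2) + c * (-c + ε) ^ (k + 1) + (-c + ε) := by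
    rw [show -c + ε = -(c - ε) by ring, pow_add_two_add_mul_pow_add_one_add_neg_of_odd hk,
      sub_sub_cancel]
    exact mul_nonneg (by linarith) (by linarith)
  have hcont : ContinuousOn (fun x : ℝ => x ^ (k + 2) + c * x ^ (k + 1) + x)
      (Set.Icc (-c) (-c + ε)) := by
    fun_prop
  have hε : 0 < ε := pos_of_mul_pos_right (one_pos.trans_le h) (pow_nonneg (by linarith) _)
  exact intermediate_value_Ioc (by linarith) hcont ⟨by rw [hleft]; linarith, hright⟩

theorem CL_n_even_real_root (n : ℕ) (hn : 4 ≤ n) (heven : Even n) :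
    ∃ x : ℝ, x ∈ Set.Ioc (-((n : ℝ) - 2)) (-((n : ℝ) - 2) + 1 / ((n : ℝ) - 3) ^ (n - 3)) ∧
      x ^ (n - 1) + ((n : ℝ) - 2) * x ^ (n - 2) + x = 0 := by
  obtain ⟨k, rfl⟩ : ∃ k, n = k + 3 := ⟨n - 3, by omega⟩
  have hk : Odd k := by simpa [Nat.even_add_one, parity_simps] using heven
  have hm : (1 : ℝ) ≤ k := by exact_mod_cast (by omega : 1 ≤ k)
  have hε : 1 / (k : ℝ) ^ k ≤ 1 := by rw [div_le_one (by positivity)]; exact one_le_pow₀ hm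
  have hsign : 1 ≤ ((k : ℝ) + 1 - 1 / (k : ℝ) ^ k) ^ k * (1 / (k : ℝ) ^ k) := by
    rw [mul_one_div, one_le_div (by positivity)]
    exact pow_le_pow_left₀ (by positivity) (by linarith) k
  push_cast
  rw [show (k : ℝ) + 3 - 2 = k + 1 by ring, show (k : ℝ) + 3 - 3 = k by ring]
  exact exists_root_mem_Ioc_of_odd hk (by positivity) (by linarith) hsign
end

section
/- For every k ≥ 1, (1−x)·D(H_{2k}, x) = x − x^{2k} + x^k − x^{k+1} = −x(x^k − 1)(1 + x^{k−1}). Consequently, the roots of D(H_{2k}, x) are exactly 0, the k-th roots of unity other than 1, and the (k−1)-th roots of −1. -/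
theorem antiregular_even_roots (k : ℕ) (hk : 1 ≤ k) :
    (∀ x : ℂ, x - x ^ (2 * k) + x ^ k - x ^ (k + 1) =
        -(x * (x ^ k - 1) * (1 + x ^ (k - 1)))) ∧
    (∀ z : ℂ, (∑ j ∈ Finset.Icc 1 (2 * k - 1), z ^ j) + z ^ k = 0 ↔
        z = 0 ∨ (z ^ k = 1 ∧ z ≠ 1) ∨ z ^ (k - 1) = -1) := by
  obtain ⟨m, rfl⟩ := Nat.exists_eq_add_of_le hk
  have e1 : 1 + m - 1 = m := by omega
  have e2 : 2 * (1 + m) - 1 = 2 * m + 1 := by omega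
  have h1 : ∀ x : ℂ, x - x ^ (2 * (1 + m)) + x ^ (1 + m) - x ^ (1 + m + 1) =
      -(x * (x ^ (1 + m) - 1) * (1 + x ^ (1 + m - 1))) := by
    intro x
    rw [e1]
    ring
  refine ⟨h1, fun z => ?_⟩
  have hins : Finset.range (2 * m + 2) = insert 0 (Finset.Icc 1 (2 * m + 1)) := by
    ext j; simp; omega
  have hIcc : (∑ j ∈ Finset.range (2 * m + 2), z ^ j) =
      1 + ∑ j ∈ Finset.Icc 1 (2 * (1 + m) - 1), z ^ j := by
    rw [e2, hins, Finset.sum_insert (by simp), pow_zero]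
  have hG : (1 - z) * ∑ i ∈ Finset.range (2 * m + 2), z ^ i = 1 - z ^ (2 * m + 2) := by
    linear_combination -(geom_sum_mul z (2 * m + 2))
  by_cases hz : z = 1
  · subst hz
    constructor
    · intro h
      exfalso
      rw [e2] at h
      simp only [one_pow, Finset.sum_const, Nat.card_Icc, nsmul_eq_mul, mul_one] at h
      have h2 : ((2 * m + 1 + 1 - 1 : ℕ) : ℂ) + 1 = 0 := h
      have h3 : ((2 * m + 2 : ℕ) : ℂ) = ((0 : ℕ) : ℂ) := by
        push_cast at h2 ⊢
        linear_combination h2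
      have := Nat.cast_injective (R := ℂ) h3
      omega
    · rintro (h | ⟨-, h⟩ | h)
      · exact absurd h one_ne_zero
      · exact absurd rfl h
      · rw [one_pow] at h
        exact absurd h (by norm_num)
  · have hne : (1 : ℂ) - z ≠ 0 := sub_ne_zero.mpr (Ne.symm hz)
    have key : (1 - z) * ((∑ j ∈ Finset.Icc 1 (2 * (1 + m) - 1), z ^ j) + z ^ (1 + m)) =
        -(z * (z ^ (1 + m) - 1) * (1 + z ^ (1 + m - 1))) := by
      rw [← h1 z]
      have hS : (∑ j ∈ Finset.Icc 1 (2 * (1 + m) - 1), z ^ j) =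
          (∑ j ∈ Finset.range (2 * m + 2), z ^ j) - 1 := by
        rw [hIcc]; ring
      rw [hS]
      have h5 : 2 * (1 + m) = 2 * m + 2 := by omega
      rw [h5]
      linear_combination hG
    constructor
    · intro h
      have hprod : -(z * (z ^ (1 + m) - 1) * (1 + z ^ (1 + m - 1))) = 0 := by
        rw [← key, h, mul_zero]
      rw [neg_eq_zero, mul_eq_zero, mul_eq_zero] at hprod
      rcases hprod with (hz0 | hroot) | hneg
      · exact Or.inl hz0
      · exact Or.inr (Or.inl ⟨sub_eq_zero.mp hroot, hz⟩)
      · exact Or.inr (Or.inr (by linear_combination hneg))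
    · intro h
      have hprod : -(z * (z ^ (1 + m) - 1) * (1 + z ^ (1 + m - 1))) = 0 := by
        rcases h with hz0 | ⟨hroot, -⟩ | hneg
        · rw [hz0]; ring
        · rw [hroot]; ring
        · rw [e1] at hneg ⊢; rw [hneg]; ring
      have h6 := key.trans hprod
      rcases mul_eq_zero.mp h6 with h' | h'
      · exact absurd h' hne
      · exact h'
end

section
/- For every k ≥ 2, the polynomial x^{2k+1} + x^{k+1} − x^k − x has exactly one negative real root, and this root lies in the interval [−2, −1/2). -/
private lemma arg_odd_key (p : ℕ) (w : ℝ) (hw : 0 < w)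
    (h : w^(2*(p+2)) = w^(p+2) + w^(p+1) + 1) :
    w^(p+2) - (w^(p+2))⁻¹ - w⁻¹ = 1 := by
  have ha : (0:ℝ) < w^(p+2) := pow_pos hw _
  have hane : w^(p+2) ≠ 0 := ha.ne'
  have hwne : w ≠ 0 := hw.ne'
  field_simp
  linear_combination w * h

theorem antiregular_odd_unique_negative_root (k : ℕ) (hk : 2 ≤ k) :
    (∃! x : ℝ, x < 0 ∧ x ^ (2 * k + 1) + x ^ (k + 1) - x ^ k - x = 0) ∧
    (∀ x : ℝ, x < 0 → x ^ (2 * k + 1) + x ^ (k + 1) - x ^ k - x = 0 →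
      x ∈ Set.Ico (-2 : ℝ) (-1 / 2)) := by
  obtain ⟨m, rfl⟩ : ∃ m, k = m + 2 := ⟨k - 2, by omega⟩
  -- the cofactor polynomial
  have hfact : ∀ x : ℝ, x ^ (2*(m+2)+1) + x^((m+2)+1) - x^(m+2) - x
      = x * (x^(2*(m+2)) + x^(m+2) - x^(m+1) - 1) := fun x => by ring
  -- existence of a root of the cofactor in Ioo (-2) (-1/2)
  have hcont : ContinuousOn (fun x : ℝ => x^(2*(m+2)) + x^(m+2) - x^(m+1) - 1)
      (Set.Icc (-2:ℝ) (-1/2)) := by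
    apply Continuous.continuousOn; fun_prop
  have hg2 : (0:ℝ) < (-2:ℝ)^(2*(m+2)) + (-2:ℝ)^(m+2) - (-2:ℝ)^(m+1) - 1 := by
    have e1 : (-2:ℝ)^(2*(m+2)) = 4 * ((-2:ℝ)^(m+1))^2 := by ring
    have e2 : (-2:ℝ)^(m+2) = -2 * (-2:ℝ)^(m+1) := by ring
    have h4 : (4:ℝ) ≤ ((-2:ℝ)^(m+1))^2 := by
      have e3 : ((-2:ℝ)^(m+1))^2 = 4^(m+1) := by
        rw [← pow_mul, mul_comm, pow_mul]; norm_num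
      rw [e3]
      calc (4:ℝ) = 4^1 := (pow_one 4).symm
        _ ≤ 4^(m+1) := pow_le_pow_right₀ (by norm_num) (by omega)
    rw [e1, e2]
    nlinarith [h4, sq_nonneg ((-2:ℝ)^(m+1) - 3/4)]
  have hgh : ((-1/2:ℝ))^(2*(m+2)) + (-1/2:ℝ)^(m+2) - (-1/2:ℝ)^(m+1) - 1 < 0 := by
    have e1 : (-1/2:ℝ)^(2*(m+2)) = (1/4) * ((-1/2:ℝ)^(m+1))^2 := by ring
    have e2 : (-1/2:ℝ)^(m+2) = (-1/2) * (-1/2:ℝ)^(m+1) := by ring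
    have h4 : ((-1/2:ℝ)^(m+1))^2 ≤ 1/4 := by
      have e3 : ((-1/2:ℝ)^(m+1))^2 = (1/4)^(m+1) := by
        rw [← pow_mul, mul_comm, pow_mul]; norm_num
      rw [e3]
      calc ((1:ℝ)/4)^(m+1) ≤ (1/4)^1 :=
            pow_le_pow_of_le_one (by norm_num) (by norm_num) (by omega)
        _ = 1/4 := pow_one _
    rw [e1, e2]
    nlinarith [h4, sq_nonneg ((-1/2:ℝ)^(m+1) + 1/2)]
  obtain ⟨x0, hx0mem, hx0⟩ :=
    intermediate_value_Ioo' (by norm_num : (-2:ℝ) ≤ -1/2) hcont ⟨hgh, hg2⟩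
  have hx0neg : x0 < 0 := lt_trans hx0mem.2 (by norm_num)
  -- uniqueness of negative roots of the cofactor
  have huniq : ∀ x y : ℝ, x < 0 → y < 0 →
      x^(2*(m+2)) + x^(m+2) - x^(m+1) - 1 = 0 →
      y^(2*(m+2)) + y^(m+2) - y^(m+1) - 1 = 0 → x = y := by
    have key : ∀ x y : ℝ, x < y → y < 0 →
        x^(2*(m+2)) + x^(m+2) - x^(m+1) - 1 = 0 →
        y^(2*(m+2)) + y^(m+2) - y^(m+1) - 1 = 0 → False := by
      intro x y hxy hy hgx hgy
      have hxv : x = -(-x) := by ring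
      have hyv : y = -(-y) := by ring
      set u := -x with hu
      set v := -y with hv
      have hvpos : 0 < v := by simp [hv]; linarith
      have hvu : v < u := by simp [hu, hv]; linarith
      have hupos : 0 < u := lt_trans hvpos hvu
      rcases Nat.even_or_odd m with ⟨n, rfl⟩ | ⟨n, rfl⟩
      · -- m = n + n : k even
        have conv : ∀ z : ℝ,
            (-z)^(2*(n+n+2)) + (-z)^(n+n+2) - (-z)^(n+n+1) - 1
            = z^(2*(n+n+2)) + z^(n+n+2) + z^(n+n+1) - 1 := by
          intro z
          rw [Even.neg_pow (⟨n+n+2, by ring⟩ : Even (2*(n+n+2))),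
            Even.neg_pow (⟨n+1, by ring⟩ : Even (n+n+2)),
            Odd.neg_pow (⟨n, by ring⟩ : Odd (n+n+1))]
          ring
        rw [hxv, conv] at hgx
        rw [hyv, conv] at hgy
        have h1 : v^(2*(n+n+2)) < u^(2*(n+n+2)) :=
          pow_lt_pow_left₀ hvu hvpos.le (by omega)
        have h2 : v^(n+n+2) < u^(n+n+2) :=
          pow_lt_pow_left₀ hvu hvpos.le (by omega)
        have h3 : v^(n+n+1) < u^(n+n+1) :=
          pow_lt_pow_left₀ hvu hvpos.le (by omega)
        linarith
      · -- m = 2n+1 : k odd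
        have conv : ∀ z : ℝ,
            (-z)^(2*(2*n+1+2)) + (-z)^(2*n+1+2) - (-z)^(2*n+1+1) - 1
            = z^(2*(2*n+1+2)) - z^(2*n+1+2) - z^(2*n+1+1) - 1 := by
          intro z
          rw [Even.neg_pow (⟨2*n+3, by ring⟩ : Even (2*(2*n+1+2))),
            Odd.neg_pow (⟨n+1, by ring⟩ : Odd (2*n+1+2)),
            Even.neg_pow (⟨n+1, by ring⟩ : Even (2*n+1+1))]
          ring
        rw [hxv, conv] at hgx
        rw [hyv, conv] at hgy
        have hu' : u^(2*(2*n+1+2)) = u^(2*n+1+2) + u^(2*n+1+1) + 1 := by linarith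
        have hv' : v^(2*(2*n+1+2)) = v^(2*n+1+2) + v^(2*n+1+1) + 1 := by linarith
        have ku := arg_odd_key (2*n+1) u hupos hu'
        have kv := arg_odd_key (2*n+1) v hvpos hv'
        have h1 : v^(2*n+1+2) < u^(2*n+1+2) :=
          pow_lt_pow_left₀ hvu hvpos.le (by omega)
        have h2 : (u^(2*n+1+2))⁻¹ < (v^(2*n+1+2))⁻¹ := by
          have := pow_pos hvpos (2*n+1+2)
          gcongr
        have h3 : u⁻¹ < v⁻¹ := by gcongr
        linarith
    intro x y hx hy hgx hgy
    rcases lt_trichotomy x y with h | h | h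
    · exact absurd (key x y h hy hgx hgy) (not_false)
    · exact h
    · exact absurd (key y x h hx hgy hgx) (not_false)
  -- assemble
  have hroot : ∀ x : ℝ, x < 0 →
      (x ^ (2*(m+2)+1) + x^((m+2)+1) - x^(m+2) - x = 0 ↔
      x^(2*(m+2)) + x^(m+2) - x^(m+1) - 1 = 0) := by
    intro x hx
    rw [hfact x]
    constructor
    · intro h
      rcases mul_eq_zero.mp h with h | h
      · exact absurd h hx.ne
      · exact h
    · intro h; rw [h, mul_zero]
  have hx0f : x0 ^ (2*(m+2)+1) + x0^((m+2)+1) - x0^(m+2) - x0 = 0 :=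
    (hroot x0 hx0neg).mpr hx0
  have hall : ∀ x : ℝ, x < 0 →
      x ^ (2*(m+2)+1) + x^((m+2)+1) - x^(m+2) - x = 0 → x = x0 := by
    intro x hx hfx
    exact huniq x x0 hx hx0neg ((hroot x hx).mp hfx) hx0
  constructor
  · exact ⟨x0, ⟨hx0neg, hx0f⟩, fun y hy => hall y hy.1 hy.2⟩
  · intro x hx hfx
    have := hall x hx hfx
    subst this
    exact ⟨hx0mem.1.le, hx0mem.2⟩
end

section
/- If z is a nonzero root of a polynomial p with non-negative integer coefficients, coefficient sum p(1) = n ≥ 2, and nonzero trailing and leading coefficients with at least two nonzero coefficients, then 1/(n−1) ≤ |z| ≤ n−1. -/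
/-! The coefficients are non-negative integers summing to `n`, so the leading one is at least `1`
and the others sum to at most `n - 1`; the Lagrange bound `‖z‖ ≤ max 1 (∑ |aᵢ| / |a_d|)` then gives
`‖z‖ ≤ n - 1`. The mirror of `p` has the same coefficients in reverse order and vanishes at `z⁻¹`,
which gives the lower bound. -/

open Polynomial Finset

namespace Polynomial

theorem IsRoot.norm_le_max_one_sum_norm_coeff_div {K : Type*} [NormedField K] {p : K[X]}
    (hp : p ≠ 0) {z : K} (hz : p.IsRoot z) :
    ‖z‖ ≤ max 1 ((∑ i ∈ range p.natDegree, ‖p.coeff i‖) / ‖p.leadingCoeff‖) := by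
  set d := p.natDegree
  set r := ‖z‖
  rcases le_or_gt r 1 with hr | hr
  · exact le_max_of_le_left hr
  refine le_max_of_le_right ((le_div_iff₀ (norm_pos_iff.2 (leadingCoeff_ne_zero.2 hp))).2 ?_)
  have hlead : p.leadingCoeff * z ^ d = -∑ i ∈ range d, p.coeff i * z ^ i := by
    rw [IsRoot.def, eval_eq_sum_range, sum_range_succ] at hz
    exact eq_neg_of_add_eq_zero_right hz
  have key : ‖p.leadingCoeff‖ * r ^ d * r ≤ (∑ i ∈ range d, ‖p.coeff i‖) * r ^ d :=
    calc ‖p.leadingCoeff‖ * r ^ d * r = ‖∑ i ∈ range d, p.coeff i * z ^ i‖ * r := by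
          rw [← norm_pow, ← norm_mul, hlead, norm_neg]
      _ ≤ (∑ i ∈ range d, ‖p.coeff i‖ * r ^ i) * r := by
          gcongr
          exact (norm_sum_le _ _).trans_eq (by simp only [norm_mul, norm_pow, r])
      _ = ∑ i ∈ range d, ‖p.coeff i‖ * r ^ (i + 1) := by
          rw [sum_mul]; simp only [pow_succ, mul_assoc]
      _ ≤ (∑ i ∈ range d, ‖p.coeff i‖) * r ^ d := by
          rw [sum_mul]
          gcongr with i hi
          · exact hr.le
          · exact mem_range.1 hi
  exact le_of_mul_le_mul_right (by linarith) (pow_pos (zero_lt_one.trans hr) d)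

theorem norm_le_max_one_eval_one_sub_one_of_aeval_eq_zero {𝕜 : Type*} [RCLike 𝕜] {p : ℕ[X]}
    (hp : p ≠ 0) {z : 𝕜} (hz : aeval z p = 0) : ‖z‖ ≤ max 1 (((p.eval 1 : ℕ) : ℝ) - 1) := by
  set q := p.map (algebraMap ℕ 𝕜)
  have hinj : Function.Injective (algebraMap ℕ 𝕜) := Nat.cast_injective
  have hq : q ≠ 0 := (Polynomial.map_ne_zero_iff hinj).2 hp
  have hroot : q.IsRoot z := by rwa [IsRoot.def, eval_map_algebraMap]
  have hbound := hroot.norm_le_max_one_sum_norm_coeff_div hq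
  simp only [q, natDegree_map_eq_of_injective hinj, coeff_map, leadingCoeff_map_of_injective hinj,
    eq_natCast, RCLike.norm_natCast] at hbound
  refine hbound.trans (max_le_max le_rfl ?_)
  have hsum : ∑ i ∈ range p.natDegree, (p.coeff i : ℝ) + p.leadingCoeff = p.eval 1 := by
    rw [eval_eq_sum_range, sum_range_succ]
    push_cast
    simp
  have hlc : (1 : ℝ) ≤ p.leadingCoeff := by
    exact_mod_cast Nat.one_le_iff_ne_zero.2 (leadingCoeff_ne_zero.2 hp)
  have hdiv : (∑ i ∈ range p.natDegree, (p.coeff i : ℝ)) / p.leadingCoeff ≤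
      ∑ i ∈ range p.natDegree, (p.coeff i : ℝ) :=
    div_le_self (sum_nonneg fun i _ => (p.coeff i).cast_nonneg) hlc
  linarith

theorem aeval_inv_mirror_eq_zero {R K : Type*} [CommSemiring R] [Field K] [Algebra R K]
    {p : R[X]} {z : K} (hz0 : z ≠ 0) (hz : aeval z p = 0) : aeval z⁻¹ p.mirror = 0 := by
  let := invertibleOfNonzero hz0
  rw [mirror, map_mul, aeval_def, ← invOf_eq_inv,
    (eval₂_reverse_eq_zero_iff _ _ _).2 (by rwa [← aeval_def]), zero_mul]

end Polynomial

theorem degree_root_modulus_bound_general (p : Polynomial ℕ) (n : ℕ) (hn : 2 ≤ n)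
    (hsum : p.eval 1 = n)
    (z : ℂ) (hz0 : z ≠ 0) (hz : Polynomial.aeval z p = 0) :
    1 / ((n : ℝ) - 1) ≤ ‖z‖ ∧ ‖z‖ ≤ (n : ℝ) - 1 := by
  have hp : p ≠ 0 := by
    rintro rfl
    rw [eval_zero] at hsum
    omega
  have hmax : max 1 ((n : ℝ) - 1) = n - 1 :=
    max_eq_right (by linarith [show (2 : ℝ) ≤ n by exact_mod_cast hn])
  have upper := norm_le_max_one_eval_one_sub_one_of_aeval_eq_zero hp hz
  have lower := norm_le_max_one_eval_one_sub_one_of_aeval_eq_zero (mirror_eq_zero.not.2 hp)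
    (aeval_inv_mirror_eq_zero hz0 hz)
  rw [hsum, hmax] at upper
  rw [mirror_eval_one, hsum, hmax, norm_inv] at lower
  exact ⟨one_div ((n : ℝ) - 1) ▸ inv_le_of_inv_le₀ (norm_pos_iff.2 hz0) lower, upper⟩

theorem degree_root_modulus_bound (p : Polynomial ℕ) (n : ℕ) (hn : 2 ≤ n)
    (hsum : p.eval 1 = n) (hsupp : 2 ≤ p.support.card)
    (z : ℂ) (hz0 : z ≠ 0) (hz : Polynomial.aeval z p = 0) :
    1 / ((n : ℝ) - 1) ≤ ‖z‖ ∧ ‖z‖ ≤ (n : ℝ) - 1 :=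
  degree_root_modulus_bound_general p n hn hsum z hz0 hz
end

section
/- Let p = a_Δ x^Δ + ... + a_δ x^δ be a polynomial with non-negative integer coefficients summing to n ≥ 4, with a_Δ ≥ 1 and Δ > δ. If p has a root z with |z| = n−1, then p(x) = x^Δ + (n−1)x^{Δ−1} and z = −(n−1). -/
/-! A root `z` gives `a_Δ z^Δ = -∑_{i<Δ} a_i z^i`, so for `r = ‖z‖ ≥ 1`
`a_Δ r^Δ ≤ ∑_{i<Δ} a_i r^i ≤ (n - a_Δ) r^(Δ-1)`, that is `a_Δ (r + 1) ≤ n`.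
For `r = n - 1` this forces `a_Δ = 1` and equality throughout, and equality in the second step
means that all the weight `n - 1` of the lower coefficients sits at `Δ - 1`. Hence
`p = X^(Δ-1) (X + n - 1)`, whose only root of modulus `n - 1` is `-(n - 1)`. -/

open Polynomial Finset

section WeightedPowerSums

variable {a : ℕ → ℝ} {r : ℝ}

theorem mul_pow_le_mul_pow_pred (ha : ∀ i, 0 ≤ a i) (hr : 1 ≤ r) {m i : ℕ} (hi : i ∈ range m) :
    a i * r ^ i ≤ a i * r ^ (m - 1) :=
  mul_le_mul_of_nonneg_left (pow_le_pow_right₀ hr (by grind)) (ha i)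

theorem sum_mul_pow_le_sum_mul_pow_pred (ha : ∀ i, 0 ≤ a i) (hr : 1 ≤ r) (m : ℕ) :
    ∑ i ∈ range m, a i * r ^ i ≤ (∑ i ∈ range m, a i) * r ^ (m - 1) := by
  rw [sum_mul]
  exact sum_le_sum fun i => mul_pow_le_mul_pow_pred ha hr

theorem eq_zero_of_sum_mul_pow_pred_le (ha : ∀ i, 0 ≤ a i) (hr : 1 < r) {m : ℕ}
    (h : (∑ i ∈ range m, a i) * r ^ (m - 1) ≤ ∑ i ∈ range m, a i * r ^ i) {i : ℕ}
    (hi : i < m - 1) : a i = 0 := by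
  have hle : ∀ j ∈ range m, a j * r ^ j ≤ a j * r ^ (m - 1) :=
    fun j => mul_pow_le_mul_pow_pred ha hr.le
  have heq : a i * r ^ i = a i * r ^ (m - 1) :=
    (sum_eq_sum_iff_of_le hle).1 (le_antisymm (sum_le_sum hle) (by rwa [← sum_mul]))
      i (mem_range.2 (by omega))
  by_contra hne
  exact (pow_lt_pow_right₀ hr hi).ne (mul_left_cancel₀ hne heq)

end WeightedPowerSums

namespace Polynomial

theorem sum_range_natDegree_coeff_add_leadingCoeff {R : Type*} [Semiring R] (p : R[X]) :
    ∑ i ∈ range p.natDegree, p.coeff i + p.leadingCoeff = p.eval 1 := by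
  simp only [eval_eq_sum_range, sum_range_succ, one_pow, mul_one]
  rfl

theorem eq_X_pow_add_C_mul_X_pow_pred {R : Type*} [Semiring R] {p : R[X]} (hp : p.Monic)
    (hd : 0 < p.natDegree) (hcoeff : ∀ i < p.natDegree - 1, p.coeff i = 0) :
    p = X ^ p.natDegree + C (p.coeff (p.natDegree - 1)) * X ^ (p.natDegree - 1) := by
  ext k
  rw [coeff_add, coeff_X_pow, coeff_C_mul_X_pow]
  rcases lt_trichotomy k (p.natDegree - 1) with hk | rfl | hk
  · simp [hcoeff k hk, show k ≠ p.natDegree by omega, hk.ne]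
  · simp [show p.natDegree - 1 ≠ p.natDegree by omega]
  · rcases (show k = p.natDegree ∨ p.natDegree < k by omega) with rfl | hk'
    · simpa [show p.natDegree ≠ p.natDegree - 1 by omega] using hp.coeff_natDegree
    · simp [coeff_eq_zero_of_natDegree_lt hk', hk'.ne', show k ≠ p.natDegree - 1 by omega]

variable {𝕜 : Type*} [RCLike 𝕜] {p : ℕ[X]} {z : 𝕜}

theorem leadingCoeff_mul_norm_pow_le_of_aeval_eq_zero (hz : aeval z p = 0) :
    (p.leadingCoeff : ℝ) * ‖z‖ ^ p.natDegree ≤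
      ∑ i ∈ range p.natDegree, (p.coeff i : ℝ) * ‖z‖ ^ i := by
  have hlead : (p.leadingCoeff : 𝕜) * z ^ p.natDegree =
      -∑ i ∈ range p.natDegree, (p.coeff i : 𝕜) * z ^ i := by
    rw [aeval_eq_sum_range, sum_range_succ] at hz
    simp only [nsmul_eq_mul] at hz
    exact eq_neg_of_add_eq_zero_right hz
  calc (p.leadingCoeff : ℝ) * ‖z‖ ^ p.natDegree
      = ‖(p.leadingCoeff : 𝕜) * z ^ p.natDegree‖ := by simp
    _ ≤ ∑ i ∈ range p.natDegree, ‖(p.coeff i : 𝕜) * z ^ i‖ := by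
      rw [hlead, norm_neg]
      exact norm_sum_le _ _
    _ = ∑ i ∈ range p.natDegree, (p.coeff i : ℝ) * ‖z‖ ^ i := by simp

theorem leadingCoeff_mul_norm_add_one_le_eval_one (hz : aeval z p = 0) (hd : 0 < p.natDegree)
    (hr : 1 ≤ ‖z‖) : (p.leadingCoeff : ℝ) * (‖z‖ + 1) ≤ p.eval 1 := by
  have hsum : ∑ i ∈ range p.natDegree, (p.coeff i : ℝ) + p.leadingCoeff = p.eval 1 := by
    exact_mod_cast sum_range_natDegree_coeff_add_leadingCoeff p
  have key := (leadingCoeff_mul_norm_pow_le_of_aeval_eq_zero hz).trans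
    (sum_mul_pow_le_sum_mul_pow_pred (fun i => Nat.cast_nonneg _) hr p.natDegree)
  rw [← pow_sub_one_mul hd.ne'] at key
  have : (p.leadingCoeff : ℝ) * ‖z‖ ≤ ∑ i ∈ range p.natDegree, (p.coeff i : ℝ) :=
    le_of_mul_le_mul_right (a := ‖z‖ ^ (p.natDegree - 1)) (by linarith) (by positivity)
  linarith

theorem coeff_eq_zero_of_leadingCoeff_mul_norm_add_one_eq_eval_one (hz : aeval z p = 0)
    (hd : 0 < p.natDegree) (hr : 1 < ‖z‖) (h : (p.leadingCoeff : ℝ) * (‖z‖ + 1) = p.eval 1)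
    {i : ℕ} (hi : i < p.natDegree - 1) : p.coeff i = 0 := by
  have hsum : ∑ i ∈ range p.natDegree, (p.coeff i : ℝ) + p.leadingCoeff = p.eval 1 := by
    exact_mod_cast sum_range_natDegree_coeff_add_leadingCoeff p
  refine Nat.cast_eq_zero.1 (eq_zero_of_sum_mul_pow_pred_le (fun i => Nat.cast_nonneg _) hr ?_ hi)
  calc (∑ i ∈ range p.natDegree, (p.coeff i : ℝ)) * ‖z‖ ^ (p.natDegree - 1)
      = p.leadingCoeff * ‖z‖ ^ p.natDegree := by
        rw [← mul_pow_sub_one hd.ne', ← mul_assoc]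
        congr 1
        linarith
    _ ≤ _ := leadingCoeff_mul_norm_pow_le_of_aeval_eq_zero hz

end Polynomial

theorem eq_neg_of_pow_add_mul_pow_pred_eq_zero {R : Type*} [Ring R] [NoZeroDivisors R]
    {z c : R} {d : ℕ} (hz : z ≠ 0) (hd : d ≠ 0) (h : z ^ d + c * z ^ (d - 1) = 0) : z = -c := by
  rw [← mul_pow_sub_one hd, ← add_mul, mul_eq_zero] at h
  exact eq_neg_of_add_eq_zero_left (h.resolve_right (pow_ne_zero _ hz))

theorem root_of_max_modulus (p : Polynomial ℕ) (n : ℕ) (hn : 4 ≤ n)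
    (hdeg : p.natTrailingDegree < p.natDegree) (hsum : p.eval 1 = n)
    (z : ℂ) (hz : Polynomial.aeval z p = 0) (hmod : ‖z‖ = (n : ℝ) - 1) :
    p = Polynomial.X ^ p.natDegree + Polynomial.C (n - 1) * Polynomial.X ^ (p.natDegree - 1) ∧
      z = -((n : ℂ) - 1) := by
  have hd : 0 < p.natDegree := by omega
  have hr : (1 : ℝ) < ‖z‖ := by
    have : (4 : ℝ) ≤ n := by exact_mod_cast hn
    linarith
  have hmonic : p.Monic := by
    have hle := leadingCoeff_mul_norm_add_one_le_eval_one hz hd hr.le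
    rw [hsum, hmod, sub_add_cancel, mul_le_iff_le_one_left (by linarith)] at hle
    exact Monic.def.2 (le_antisymm (by exact_mod_cast hle)
      (Nat.one_le_iff_ne_zero.2 (leadingCoeff_ne_zero.2 (ne_zero_of_natDegree_gt hd))))
  have hshape := eq_X_pow_add_C_mul_X_pow_pred hmonic hd fun i =>
    coeff_eq_zero_of_leadingCoeff_mul_norm_add_one_eq_eval_one hz hd hr
      (by rw [hmonic.leadingCoeff, hsum, hmod]; push_cast; ring)
  have hcoeff : p.coeff (p.natDegree - 1) = n - 1 := by
    have h := congrArg (eval 1) hshape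
    simp only [hsum, eval_add, eval_mul, eval_pow, eval_X, eval_C, one_pow, mul_one] at h
    omega
  refine ⟨hcoeff ▸ hshape, eq_neg_of_pow_add_mul_pow_pred_eq_zero (d := p.natDegree) ?_ hd.ne' ?_⟩
  · exact norm_pos_iff.1 (by linarith)
  · rw [hshape, hcoeff] at hz
    simpa [Nat.cast_sub (by omega : 1 ≤ n)] using hz
end

section
/- Let p be a polynomial with non-negative integer coefficients summing to n ≥ 2, with at least two nonzero coefficients. If z = ir is a nonzero purely imaginary root of p (r real, r ≠ 0), then 1/√(n−1) ≤ |z| ≤ √(n−1). -/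
/-!
Split `p = E(X²) + X·O(X²)` into even and odd parts, both with coefficients in `ℕ`. At `z = ir`
the real part of `p(z)` is `E(-r²)` and the imaginary part is `r·O(-r²)`, so `-r²` is a root of
whichever of `E`, `O` is nonzero, a polynomial whose coefficient sum is at most `n`. A root `x`
with `‖x‖ ≥ 1` of a nonzero `q ∈ ℕ[X]` satisfies `lc(q)·‖x‖ ≤ q(1) - lc(q)` (a Cauchy-type bound
with the sum of the lower coefficients), so `r² ≤ n - 1`; applying this to the reversed
polynomial, which has root `-r⁻²` and the same coefficient sum, gives `r⁻² ≤ n - 1`.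
-/

open Polynomial Complex Finset

namespace Polynomial

theorem eval_one_eq_sum_coeff_add_leadingCoeff {R : Type*} [Semiring R] (q : R[X]) :
    q.eval 1 = ∑ i ∈ range q.natDegree, q.coeff i + q.leadingCoeff := by
  rw [eval_eq_sum_range, sum_range_succ]
  simp only [one_pow, mul_one]
  rfl

theorem eval_one_reverse {R : Type*} [CommSemiring R] (q : R[X]) : q.reverse.eval 1 = q.eval 1 := by
  let := invertibleOne (α := R)
  simpa using eval₂_reverse_mul_pow (RingHom.id R) 1 q

theorem expand_contract_add_X_mul_expand_contract_divX {R : Type*} [CommSemiring R] (p : R[X]) :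
    expand R 2 (contract 2 p) + X * expand R 2 (contract 2 p.divX) = p := by
  ext n
  rcases n.even_or_odd' with ⟨k, rfl | rfl⟩
  · rcases k with _ | k
    · simp [coeff_expand, coeff_contract]
    · rw [show 2 * (k + 1) = 2 * k + 1 + 1 by ring, coeff_add, coeff_X_mul,
        show 2 * k + 1 + 1 = (k + 1) * 2 by ring]
      simp [coeff_expand, coeff_contract, Nat.not_two_dvd_bit1]
  · rw [coeff_add, coeff_X_mul]
    simp [coeff_expand, coeff_contract, mul_comm k 2]

theorem aeval_eq_aeval_sq_contract_add_mul {R A : Type*} [CommSemiring R] [CommSemiring A]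
    [Algebra R A] (p : R[X]) (x : A) :
    aeval x p = aeval (x ^ 2) (contract 2 p) + x * aeval (x ^ 2) (contract 2 p.divX) := by
  conv_lhs => rw [← expand_contract_add_X_mul_expand_contract_divX p]
  simp only [map_add, map_mul, aeval_X, expand_aeval]

section RCLike

variable {𝕜 : Type*} [RCLike 𝕜]

theorem leadingCoeff_mul_norm_le_sum_coeff_of_aeval_eq_zero {q : ℕ[X]} {x : 𝕜}
    (hx : aeval x q = 0) (h1 : 1 ≤ ‖x‖) :
    (q.leadingCoeff : ℝ) * ‖x‖ ≤ ∑ i ∈ range q.natDegree, (q.coeff i : ℝ) := by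
  set m := q.natDegree
  have hlead : (q.leadingCoeff : 𝕜) * x ^ m = -∑ i ∈ range m, (q.coeff i : 𝕜) * x ^ i := by
    rw [aeval_eq_sum_range, sum_range_succ] at hx
    simp only [nsmul_eq_mul] at hx
    exact eq_neg_of_add_eq_zero_right hx
  have hnorm : (q.leadingCoeff : ℝ) * ‖x‖ ^ m = ‖∑ i ∈ range m, (q.coeff i : 𝕜) * x ^ i‖ := by
    rw [← norm_neg (∑ i ∈ range m, _), ← hlead, norm_mul, norm_pow, RCLike.norm_natCast]
  refine le_of_mul_le_mul_right ?_ (pow_pos (zero_lt_one.trans_le h1) m)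
  calc (q.leadingCoeff : ℝ) * ‖x‖ * ‖x‖ ^ m
      = ‖x‖ * ‖∑ i ∈ range m, (q.coeff i : 𝕜) * x ^ i‖ := by rw [← hnorm]; ring
    _ ≤ ‖x‖ * ∑ i ∈ range m, (q.coeff i : ℝ) * ‖x‖ ^ i := by
        gcongr
        refine (norm_sum_le _ _).trans_eq (sum_congr rfl fun i _ => ?_)
        rw [norm_mul, norm_pow, RCLike.norm_natCast]
    _ = ∑ i ∈ range m, (q.coeff i : ℝ) * ‖x‖ ^ (i + 1) := by
        rw [mul_sum]
        exact sum_congr rfl fun i _ => by ring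
    _ ≤ ∑ i ∈ range m, (q.coeff i : ℝ) * ‖x‖ ^ m := by
        gcongr with i hi
        exact mem_range.mp hi
    _ = (∑ i ∈ range m, (q.coeff i : ℝ)) * ‖x‖ ^ m := by rw [sum_mul]

theorem norm_le_max_one_eval_one_sub_one_of_aeval_eq_zero_s15 {q : ℕ[X]} (hq : q ≠ 0) {x : 𝕜}
    (hx : aeval x q = 0) : ‖x‖ ≤ max 1 (((q.eval 1 : ℕ) : ℝ) - 1) := by
  rcases lt_or_ge ‖x‖ 1 with h1 | h1
  · exact le_max_of_le_left h1.le
  have hlead : (1 : ℝ) ≤ q.leadingCoeff := by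
    exact_mod_cast Nat.one_le_iff_ne_zero.mpr (leadingCoeff_ne_zero.mpr hq)
  have := leadingCoeff_mul_norm_le_sum_coeff_of_aeval_eq_zero hx h1
  refine le_max_of_le_right ?_
  rw [eval_one_eq_sum_coeff_add_leadingCoeff]
  push_cast
  nlinarith

theorem norm_inv_le_max_one_eval_one_sub_one_of_aeval_eq_zero {q : ℕ[X]} (hq : q ≠ 0) {x : 𝕜}
    (hx0 : x ≠ 0) (hx : aeval x q = 0) : ‖x‖⁻¹ ≤ max 1 (((q.eval 1 : ℕ) : ℝ) - 1) := by
  let := invertibleOfNonzero hx0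
  have hrev : aeval x⁻¹ q.reverse = 0 := by
    rw [← invOf_eq_inv, aeval_def, eval₂_reverse_eq_zero_iff, ← aeval_def, hx]
  rw [← norm_inv, ← eval_one_reverse]
  exact norm_le_max_one_eval_one_sub_one_of_aeval_eq_zero_s15 (reverse_eq_zero.not.mpr hq) hrev

end RCLike

theorem exists_ne_zero_eval_one_le_aeval_neg_sq_eq_zero {p : ℕ[X]} (hp : p ≠ 0) {r : ℝ}
    (hr : r ≠ 0) (hz : aeval ((r : ℂ) * I) p = 0) :
    ∃ q : ℕ[X], q ≠ 0 ∧ q.eval 1 ≤ p.eval 1 ∧ aeval (-r ^ 2) q = 0 := by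
  set E := contract 2 p
  set O := contract 2 p.divX
  have hdecomp : expand ℕ 2 E + X * expand ℕ 2 O = p :=
    expand_contract_add_X_mul_expand_contract_divX p
  have heval : E.eval 1 + O.eval 1 = p.eval 1 := by
    rw [← hdecomp]
    simp only [eval_add, eval_mul, eval_X, expand_eval, one_pow, one_mul]
  have hparts : aeval ((r : ℂ) * I) p
      = ((aeval (-r ^ 2) E : ℝ) : ℂ) + ((r * aeval (-r ^ 2) O : ℝ) : ℂ) * I := by
    have hsq : ((r : ℂ) * I) ^ 2 = algebraMap ℝ ℂ (-r ^ 2) := by simp [mul_pow]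
    rw [aeval_eq_aeval_sq_contract_add_mul, hsq, aeval_algebraMap_apply, aeval_algebraMap_apply,
      Complex.coe_algebraMap]
    push_cast
    ring
  obtain ⟨hE, hO⟩ : aeval (-r ^ 2) E = 0 ∧ aeval (-r ^ 2) O = 0 := by
    rw [hparts, Complex.ext_iff] at hz
    simpa [hr] using hz
  by_cases hE0 : E = 0
  · refine ⟨O, fun hO0 => hp ?_, by omega, hO⟩
    rw [← hdecomp, hE0, hO0, map_zero, mul_zero, add_zero]
  · exact ⟨E, hE0, by omega, hE⟩

end Polynomial

theorem imaginary_degree_root_bound_general (p : Polynomial ℕ) (n : ℕ) (hn : 2 ≤ n)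
    (hsum : p.eval 1 = n)
    (r : ℝ) (hr : r ≠ 0) (hz : Polynomial.aeval ((r : ℂ) * Complex.I) p = 0) :
    1 / Real.sqrt ((n : ℝ) - 1) ≤ ‖(r : ℂ) * Complex.I‖ ∧
      ‖(r : ℂ) * Complex.I‖ ≤ Real.sqrt ((n : ℝ) - 1) := by
  have hp : p ≠ 0 := by
    rintro rfl
    rw [eval_zero] at hsum
    omega
  obtain ⟨q, hq, hq1, hqr⟩ := exists_ne_zero_eval_one_le_aeval_neg_sq_eq_zero hp hr hz
  have hbound : max 1 (((q.eval 1 : ℕ) : ℝ) - 1) ≤ n - 1 := by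
    have : ((q.eval 1 : ℕ) : ℝ) ≤ n := by exact_mod_cast hsum ▸ hq1
    have : (2 : ℝ) ≤ n := by exact_mod_cast hn
    exact max_le (by linarith) (by linarith)
  have hs : ‖-r ^ 2‖ = r ^ 2 := by simp
  have hup : r ^ 2 ≤ n - 1 :=
    hs ▸ (norm_le_max_one_eval_one_sub_one_of_aeval_eq_zero_s15 hq hqr).trans hbound
  have hlow : (r ^ 2)⁻¹ ≤ n - 1 :=
    hs ▸ (norm_inv_le_max_one_eval_one_sub_one_of_aeval_eq_zero hq (by simpa using hr) hqr).trans
      hbound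
  have hnorm : ‖(r : ℂ) * Complex.I‖ = √(r ^ 2) := by simp [Real.sqrt_sq_eq_abs]
  rw [hnorm, one_div, ← Real.sqrt_inv]
  exact ⟨Real.sqrt_le_sqrt (inv_le_of_inv_le₀ (by positivity) hlow), Real.sqrt_le_sqrt hup⟩

theorem imaginary_degree_root_bound (p : Polynomial ℕ) (n : ℕ) (hn : 2 ≤ n)
    (hsum : p.eval 1 = n) (hsupp : 2 ≤ p.support.card)
    (r : ℝ) (hr : r ≠ 0) (hz : Polynomial.aeval ((r : ℂ) * Complex.I) p = 0) :
    1 / Real.sqrt ((n : ℝ) - 1) ≤ ‖(r : ℂ) * Complex.I‖ ∧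
      ‖(r : ℂ) * Complex.I‖ ≤ Real.sqrt ((n : ℝ) - 1) :=
  imaginary_degree_root_bound_general p n hn hsum r hr hz
end

section
/- For n = 2k even, k ≥ 2, every nonzero root z of D(H_n, x) = Σ_{j=1}^{n−1} x^j + x^k satisfies 1/2 ≤ |z| ≤ 2. -/
/-! Multiplying by `z - 1` telescopes the polynomial:
`(∑_{j=1}^{2k-1} z^j + z^k) (z - 1) = z (z^k - 1) (z^{k-1} + 1)`.
Hence every nonzero root is a `k`-th root of unity or a `(k-1)`-th root of `-1`, so `|z| = 1`. -/

open Finset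

theorem geom_sum_Icc_add_pow_mul_sub_one {R : Type*} [CommRing R] (x : R) (n : ℕ) :
    (∑ j ∈ Icc 1 (2 * n + 1), x ^ j + x ^ (n + 1)) * (x - 1) =
      x * (x ^ (n + 1) - 1) * (x ^ n + 1) := by
  rw [add_mul, ← Ico_add_one_right_eq_Icc, geom_sum_Ico_mul x (by omega)]
  ring

theorem norm_eq_one_of_geom_sum_Icc_add_pow_eq_zero {k : ℕ} {z : ℂ} (hz0 : z ≠ 0)
    (hz : ∑ j ∈ Icc 1 (2 * k - 1), z ^ j + z ^ k = 0) : ‖z‖ = 1 := by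
  obtain _ | n := k
  · simp at hz
  have hroot : z * (z ^ (n + 1) - 1) * (z ^ n + 1) = 0 := by
    rw [show 2 * (n + 1) - 1 = 2 * n + 1 by omega] at hz
    rw [← geom_sum_Icc_add_pow_mul_sub_one, hz, zero_mul]
  rcases mul_eq_zero.mp hroot with hprod | hneg
  · rcases mul_eq_zero.mp hprod with hzero | hunit
    · exact absurd hzero hz0
    · exact Complex.norm_eq_one_of_pow_eq_one (sub_eq_zero.mp hunit) n.succ_ne_zero
  · have hn : n ≠ 0 := by
      rintro rfl
      norm_num at hneg
    refine Complex.norm_eq_one_of_pow_eq_one (n := 2 * n) ?_ (by omega)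
    rw [pow_mul', eq_neg_of_add_eq_zero_left hneg, neg_one_sq]

theorem antiregular_even_root_modulus_general (k : ℕ) (z : ℂ) (hz0 : z ≠ 0)
    (hz : (∑ j ∈ Finset.Icc 1 (2 * k - 1), z ^ j) + z ^ k = 0) :
    1 / 2 ≤ ‖z‖ ∧ ‖z‖ ≤ 2 := by
  rw [norm_eq_one_of_geom_sum_Icc_add_pow_eq_zero hz0 hz]
  norm_num

theorem antiregular_even_root_modulus (k : ℕ) (hk : 2 ≤ k) (z : ℂ) (hz0 : z ≠ 0)
    (hz : (∑ j ∈ Finset.Icc 1 (2 * k - 1), z ^ j) + z ^ k = 0) :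
    1 / 2 ≤ ‖z‖ ∧ ‖z‖ ≤ 2 :=
  antiregular_even_root_modulus_general k z hz0 hz
end
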